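/- arXiv:hep-th/9510172 — 9 statements merged into one kernel-verified Lean document; each statement's English description precedes it below -/
import Mathlib

section
/- Under these hypotheses: (a) the subset X̄' := {℘(Φ, g, h) : Φ ∈ F, g, h ∈ A} is closed under the bracket [X, Y] := ∇_X Y − ∇_Y X, i.e. [X', Y'] ∈ X̄' for all X', Y' ∈ X̄'; and (b) every X' ∈ X̄' preserves Ī, i.e. δ_{X'}(Ī) ⊆ Ī. -/
/-!
Write `ℓ X := δ_X λ = ∂¹X₀ − λκX₁` for `X = X₀T + X₁N + X₂B`. Since `∂⁻¹∂¹ = ∂⁰` and `F = ker ∂⁰`,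
`X ∈ X̄'` exactly when `∂⁻¹(ℓ X) = 0`. Expanding `∇_X Y − ∇_Y X` in the Frenet frame gives
`ℓ [X, Y] = δ_X (ℓ Y) − δ_Y (ℓ X)`: the leftover terms add up to
`λ(⟨∇_s X, ∇_s Y⟩ − c⟨X, Y⟩)` taken over the `N, B` components, which is symmetric in `X` and `Y`.
As `δ_X` commutes with `∂⁻¹`, this gives (a). For (b), `∂⁻¹(ℓ X) = 0` forces `∂_s(ℓ X) = 0`, so
`δ_X(∂_s λ) = −λ⁻¹ (ℓ X) ∂_s λ ∈ Ī`; then the `f ∈ Ī` with `δ_X f ∈ Ī` form an ideal closed under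
every `∂^m` and containing `∂_s λ`, hence all of `Ī`.
-/

section IntegerDerivations

variable {A : Type*} [CommRing A] [Algebra ℝ A] {D : ℤ → A →ₗ[ℝ] A}

theorem D_D_of_add_eq (hD_comp : ∀ (m n : ℤ) (f : A), D m (D n f) = D (m + n) f)
    {m n k : ℤ} (h : m + n = k) (f : A) : D m (D n f) = D k f :=
  h ▸ hD_comp m n f

theorem mem_range_sub_D_zero_iff (hD_comp : ∀ (m n : ℤ) (f : A), D m (D n f) = D (m + n) f)
    {f : A} : f ∈ Set.range (fun g : A => g - D 0 g) ↔ D 0 f = 0 := by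
  constructor
  · rintro ⟨g, rfl⟩
    rw [map_sub, D_D_of_add_eq hD_comp (zero_add 0), sub_self]
  · intro hf
    exact ⟨f, by simp [hf]⟩

theorem D_one_eq_zero_of_D_neg_one_eq_zero
    (hD_comp : ∀ (m n : ℤ) (f : A), D m (D n f) = D (m + n) f) {f : A} (hf : D (-1) f = 0) :
    D 1 f = 0 := by
  rw [← D_D_of_add_eq hD_comp (by norm_num : (2 : ℤ) + -1 = 1), hf, map_zero]

theorem map_mem_of_minimal_D_stable {δ : A →ₗ[ℝ] A}
    (hδ_mul : ∀ f g, δ (f * g) = δ f * g + f * δ g) (hδ_D : ∀ m f, δ (D m f) = D m (δ f))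
    {I : Ideal A} {u : A} (hI_D : ∀ (m : ℤ), ∀ f ∈ I, D m f ∈ I)
    (hI_min : ∀ J : Ideal A, u ∈ J → (∀ (m : ℤ), ∀ f ∈ J, D m f ∈ J) → I ≤ J)
    (hδu : δ u ∈ I) (hu : u ∈ I) {f : A} (hf : f ∈ I) : δ f ∈ I := by
  let J : Ideal A :=
    { carrier := {f | f ∈ I ∧ δ f ∈ I}
      add_mem' := fun ha hb => ⟨I.add_mem ha.1 hb.1, by rw [map_add]; exact I.add_mem ha.2 hb.2⟩
      zero_mem' := ⟨I.zero_mem, by rw [map_zero]; exact I.zero_mem⟩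
      smul_mem' := fun a f hf => ⟨I.smul_mem a hf.1, by
        rw [smul_eq_mul, hδ_mul]; exact I.add_mem (I.mul_mem_left _ hf.1) (I.mul_mem_left _ hf.2)⟩ }
  refine (hI_min J ⟨hu, hδu⟩ (fun m f hf => ⟨hI_D m f hf.1, ?_⟩) hf).2
  rw [hδ_D]; exact hI_D m _ hf.2

end IntegerDerivations

theorem eq_smul_add_smul_add_smul {R : Type*} [Semiring R] (x : Fin 3 → R) :
    x = x 0 • ![1, 0, 0] + x 1 • ![0, 1, 0] + x 2 • ![0, 0, 1] := by
  funext i; fin_cases i <;> simp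

theorem exists_eq_pl_iff {A : Type*} [CommRing A] [Algebra ℝ A] {D : ℤ → A →ₗ[ℝ] A}
    (hD_comp : ∀ (m n : ℤ) (f : A), D m (D n f) = D (m + n) f) {w : A}
    {pl : A → A → A → (Fin 3 → A)}
    (hpl : ∀ Φ g h : A,
      pl Φ g h = (D (-1) (w * g) + Φ) • ![1, 0, 0] + g • ![0, 1, 0] + h • ![0, 0, 1])
    (x : Fin 3 → A) :
    (∃ Φ g h : A, Φ ∈ Set.range (fun f : A => f - D 0 f) ∧ x = pl Φ g h) ↔
      D 0 (x 0) = D (-1) (w * x 1) := by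
  have hD_zero_neg_one : ∀ f, D 0 (D (-1) f) = D (-1) f := D_D_of_add_eq hD_comp (zero_add _)
  simp only [mem_range_sub_D_zero_iff hD_comp]
  constructor
  · rintro ⟨Φ, g, h, hΦ, rfl⟩
    simp [hpl, hΦ, hD_zero_neg_one]
  · intro hx
    refine ⟨x 0 - D (-1) (w * x 1), x 1, x 2, by rw [map_sub, hx, hD_zero_neg_one, sub_self], ?_⟩
    rw [hpl, add_sub_cancel, ← eq_smul_add_smul_add_smul]

section Frenet

variable {A : Type*} [CommRing A] [Algebra ℝ A] {lam kap tau : A} {ds : A → A}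
  {nabS : (Fin 3 → A) →ₗ[ℝ] (Fin 3 → A)}

theorem nabS_eq
    (hnabS_leib : ∀ (f : A) (x : Fin 3 → A), nabS (f • x) = ds f • x + f • nabS x)
    (hnabS_T : nabS ![1, 0, 0] = kap • ![0, 1, 0])
    (hnabS_N : nabS ![0, 1, 0] = -(kap • ![1, 0, 0]) + tau • ![0, 0, 1])
    (hnabS_B : nabS ![0, 0, 1] = -(tau • ![0, 1, 0])) (x : Fin 3 → A) :
    nabS x = ![ds (x 0) - kap * x 1, kap * x 0 + ds (x 1) - tau * x 2, tau * x 1 + ds (x 2)] := by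
  conv_lhs => rw [eq_smul_add_smul_add_smul x]
  rw [map_add, map_add, hnabS_leib, hnabS_leib, hnabS_leib, hnabS_T, hnabS_N, hnabS_B]
  simp only [Matrix.smul_vec3, Matrix.vec3_add, Matrix.neg_cons, Matrix.neg_empty, smul_eq_mul]
  apply Matrix.vec3_eq <;> ring

variable {kapI : A} {c : ℝ} {del : (Fin 3 → A) →ₗ[ℝ] A →ₗ[ℝ] A}
  {nab : (Fin 3 → A) → (Fin 3 → A) →ₗ[ℝ] (Fin 3 → A)} {inner : (Fin 3 → A) → (Fin 3 → A) → A}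

theorem nab_eq (hinner : ∀ x y, inner x y = x 0 * y 0 + x 1 * y 1 + x 2 * y 2)
    (hnab_leib : ∀ (x : Fin 3 → A) (f : A) (y : Fin 3 → A),
      nab x (f • y) = del x f • y + f • nab x y)
    (hnab_T : ∀ x, nab x ![1, 0, 0] = inner ![0, 1, 0] (nabS x) • ![0, 1, 0]
      + inner ![0, 0, 1] (nabS x) • ![0, 0, 1])
    (hnab_N : ∀ x, nab x ![0, 1, 0]
      = inner (kapI • ![0, 0, 1]) (nabS (nabS x) + c • x) • ![0, 0, 1]
        - inner ![0, 1, 0] (nabS x) • ![1, 0, 0])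
    (hnab_B : ∀ x, nab x ![0, 0, 1] = -(inner ![0, 0, 1] (nabS x) • ![1, 0, 0])
      - inner (kapI • ![0, 0, 1]) (nabS (nabS x) + c • x) • ![0, 1, 0])
    (x y : Fin 3 → A) :
    nab x y =
      ![del x (y 0) - y 1 * nabS x 1 - y 2 * nabS x 2,
        del x (y 1) + y 0 * nabS x 1 - y 2 * (kapI * (nabS (nabS x) 2 + c • x 2)),
        del x (y 2) + y 0 * nabS x 2 + y 1 * (kapI * (nabS (nabS x) 2 + c • x 2))] := by
  conv_lhs => rw [eq_smul_add_smul_add_smul y]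
  rw [map_add, map_add, hnab_leib, hnab_leib, hnab_leib, hnab_T, hnab_N, hnab_B]
  simp only [hinner, Pi.add_apply, Pi.smul_apply, Matrix.smul_vec3, Matrix.vec3_add,
    Matrix.neg_cons, Matrix.neg_empty, Matrix.cons_sub_cons, Matrix.empty_sub_empty,
    Matrix.cons_val_zero, Matrix.cons_val_one, Matrix.cons_val_two, Matrix.head_cons,
    Matrix.tail_cons, smul_eq_mul]
  apply Matrix.vec3_eq <;> ring

variable {D : ℤ → A →ₗ[ℝ] A}

-- The right side is symmetric in `x` and `y`, so these terms cancel in `del_bracket_lam`.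
theorem bracket_defect_eq (hD_leibniz : ∀ f g : A, D 1 (f * g) = D 1 f * g + f * D 1 g)
    (hD_one : ∀ f, D 1 f = lam * ds f) (hkap : kap * kapI = 1)
    (hnabS : ∀ x, nabS x =
      ![ds (x 0) - kap * x 1, kap * x 0 + ds (x 1) - tau * x 2, tau * x 1 + ds (x 2)])
    (hdel_mul : ∀ (x : Fin 3 → A) (f g : A), del x (f * g) = del x f * g + f * del x g)
    (hdel_lam : ∀ x, del x lam = lam * nabS x 0)
    (hdel_kap : ∀ x, del x kap = nabS (nabS x) 1 + c • x 1 - 2 * kap * nabS x 0)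
    (x y : Fin 3 → A) :
    D 1 (y 1 * nabS x 1) + D 1 (y 2 * nabS x 2)
      + lam * kap * (y 0 * nabS x 1 - y 2 * (kapI * (nabS (nabS x) 2 + c • x 2)))
      - del x (lam * kap) * y 1
      = lam * (nabS x 1 * nabS y 1 + nabS x 2 * nabS y 2 - c • (x 1 * y 1 + x 2 * y 2)) := by
  have hds_one (z : Fin 3 → A) : ds (z 1) = nabS z 1 - kap * z 0 + tau * z 2 := by
    rw [hnabS z, Matrix.cons_val_one, Matrix.cons_val_zero]; ring
  have hds_two (z : Fin 3 → A) : ds (z 2) = nabS z 2 - tau * z 1 := by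
    rw [hnabS z, Matrix.cons_val_two, Matrix.tail_cons, Matrix.head_cons]; ring
  rw [hD_leibniz, hD_leibniz, hD_one, hD_one, hD_one, hD_one, hds_one, hds_two, hds_one, hds_two,
    hdel_mul, hdel_lam, hdel_kap]
  simp only [Algebra.smul_def]
  linear_combination (-(lam * y 2) * (nabS (nabS x) 2 + algebraMap ℝ A c * x 2)) * hkap

theorem del_lam_eq_D_one_sub (hD_one : ∀ f, D 1 f = lam * ds f)
    (hnabS : ∀ x, nabS x =
      ![ds (x 0) - kap * x 1, kap * x 0 + ds (x 1) - tau * x 2, tau * x 1 + ds (x 2)])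
    (hdel_lam : ∀ x, del x lam = lam * nabS x 0) (x : Fin 3 → A) :
    del x lam = D 1 (x 0) - lam * kap * x 1 := by
  rw [hdel_lam, hnabS, Matrix.cons_val_zero, hD_one]; ring

theorem del_bracket_lam (hD_leibniz : ∀ f g : A, D 1 (f * g) = D 1 f * g + f * D 1 g)
    (hD_one : ∀ f, D 1 f = lam * ds f) (hkap : kap * kapI = 1)
    (hnabS : ∀ x, nabS x =
      ![ds (x 0) - kap * x 1, kap * x 0 + ds (x 1) - tau * x 2, tau * x 1 + ds (x 2)])
    (hdel_mul : ∀ (x : Fin 3 → A) (f g : A), del x (f * g) = del x f * g + f * del x g)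
    (hdel_D : ∀ (x : Fin 3 → A) (m : ℤ) (f : A), del x (D m f) = D m (del x f))
    (hdel_lam : ∀ x, del x lam = lam * nabS x 0)
    (hdel_kap : ∀ x, del x kap = nabS (nabS x) 1 + c • x 1 - 2 * kap * nabS x 0)
    (hnab : ∀ x y, nab x y =
      ![del x (y 0) - y 1 * nabS x 1 - y 2 * nabS x 2,
        del x (y 1) + y 0 * nabS x 1 - y 2 * (kapI * (nabS (nabS x) 2 + c • x 2)),
        del x (y 2) + y 0 * nabS x 2 + y 1 * (kapI * (nabS (nabS x) 2 + c • x 2))])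
    {bracket : (Fin 3 → A) → (Fin 3 → A) → (Fin 3 → A)}
    (hbracket : ∀ x y, bracket x y = nab x y - nab y x) (x y : Fin 3 → A) :
    del (bracket x y) lam = del x (del y lam) - del y (del x lam) := by
  simp only [del_lam_eq_D_one_sub hD_one hnabS hdel_lam]
  rw [hbracket, Pi.sub_apply, Pi.sub_apply, hnab, hnab]
  simp only [Matrix.cons_val_zero, Matrix.cons_val_one, map_sub, hdel_D]
  rw [hdel_mul x, hdel_mul y]
  have := bracket_defect_eq hD_leibniz hD_one hkap hnabS hdel_mul hdel_lam hdel_kap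
  linear_combination (norm := (simp only [Algebra.smul_def]; ring)) this y x - this x y

end Frenet

theorem ECL_Xbar_prime_subalgebra_preserves_ideal_general
    {A : Type*} [CommRing A] [Algebra ℝ A]
    -- ∂^ℤ-algebra structure on A
    (D : ℤ → A →ₗ[ℝ] A)
    (hD_comp : ∀ (m n : ℤ) (f : A), D m (D n f) = D (m + n) f)
    (hD_leibniz : ∀ f g : A, D 1 (f * g) = D 1 f * g + f * D 1 g)
    -- the curvature `c` of the ambient space, and λ, κ, τ with λ, κ invertible
    (c : ℝ) (lam kap tau lamI kapI : A)
    (hlam : lam * lamI = 1) (hkap : kap * kapI = 1)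
    -- the free A-module X̄ with orthonormal basis T, N, B and its bilinear form
    (T N B : Fin 3 → A)
    (hT : T = ![1, 0, 0]) (hN : N = ![0, 1, 0]) (hB : B = ![0, 0, 1])
    (inner : (Fin 3 → A) → (Fin 3 → A) → A)
    (hinner : ∀ x y, inner x y = x 0 * y 0 + x 1 * y 1 + x 2 * y 2)
    -- ∂_s := λ⁻¹ ∂¹
    (ds : A → A) (hds : ∀ f, ds f = lamI * D 1 f)
    -- ∇_s, determined by the Leibniz rule and the Frenet–Serret relations
    (nabS : (Fin 3 → A) →ₗ[ℝ] (Fin 3 → A))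
    (hnabS_leib : ∀ (f : A) (x : Fin 3 → A), nabS (f • x) = ds f • x + f • nabS x)
    (hnabS_T : nabS T = kap • N)
    (hnabS_N : nabS N = -(kap • T) + tau • B)
    (hnabS_B : nabS B = -(tau • N))
    -- the variation operators δ_X, ℝ-linear in X
    (del : (Fin 3 → A) →ₗ[ℝ] A →ₗ[ℝ] A)
    (hdel_mul : ∀ (x : Fin 3 → A) (f g : A), del x (f * g) = del x f * g + f * del x g)
    (hdel_D : ∀ (x : Fin 3 → A) (m : ℤ) (f : A), del x (D m f) = D m (del x f))
    (hdel_ds : ∀ (x : Fin 3 → A) (f : A),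
      del x (ds f) = ds (del x f) - lamI * del x lam * ds f)
    (hdel_lam : ∀ x, del x lam = inner (lam • T) (nabS x))
    (hdel_kap : ∀ x, del x kap
      = inner N (nabS (nabS x) + c • x) - inner ((2 * kap) • T) (nabS x))
    -- the operators ∇_X
    (nab : (Fin 3 → A) → (Fin 3 → A) →ₗ[ℝ] (Fin 3 → A))
    (hnab_leib : ∀ (x : Fin 3 → A) (f : A) (y : Fin 3 → A),
      nab x (f • y) = del x f • y + f • nab x y)
    (hnab_T : ∀ x, nab x T = inner N (nabS x) • N + inner B (nabS x) • B)
    (hnab_N : ∀ x, nab x N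
      = inner (kapI • B) (nabS (nabS x) + c • x) • B - inner N (nabS x) • T)
    (hnab_B : ∀ x, nab x B
      = -(inner B (nabS x) • T) - inner (kapI • B) (nabS (nabS x) + c • x) • N)
    -- the bracket
    (bracket : (Fin 3 → A) → (Fin 3 → A) → (Fin 3 → A))
    (hbracket : ∀ x y, bracket x y = nab x y - nab y x)
    -- F := ∫(A)
    (F : Set A) (hF : F = Set.range (fun f : A => f - D 0 f))
    -- Ī: the smallest ring ideal of A containing ∂_s λ and closed under every ∂^m
    (Ibar : Ideal A)
    (hIbar_mem : ds lam ∈ Ibar)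
    (hIbar_D : ∀ (m : ℤ), ∀ f ∈ Ibar, D m f ∈ Ibar)
    (hIbar_min : ∀ J : Ideal A, ds lam ∈ J → (∀ (m : ℤ), ∀ f ∈ J, D m f ∈ J) → Ibar ≤ J)
    -- the injection ℘(Φ, g, h) = (∂⁻¹(λκg) + Φ)T + gN + hB and its image X̄'
    (pl : A → A → A → (Fin 3 → A))
    (hpl : ∀ Φ g h : A, pl Φ g h = (D (-1) (lam * kap * g) + Φ) • T + g • N + h • B)
    (Xbar' : Set (Fin 3 → A))
    (hXbar' : Xbar' = {x | ∃ Φ g h : A, Φ ∈ F ∧ x = pl Φ g h}) :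
    -- (a) X̄' is closed under the bracket
    (∀ x ∈ Xbar', ∀ y ∈ Xbar', bracket x y ∈ Xbar')
    -- (b) every X' ∈ X̄' preserves Ī
    ∧ (∀ x ∈ Xbar', ∀ f ∈ Ibar, del x f ∈ Ibar) := by
  subst hT hN hB hF hXbar'
  have hD_one (f : A) : D 1 f = lam * ds f := by rw [hds, ← mul_assoc, hlam, one_mul]
  have hnabS := nabS_eq hnabS_leib hnabS_T hnabS_N hnabS_B
  have hdel_lam' (x : Fin 3 → A) : del x lam = lam * nabS x 0 := by simp [hdel_lam, hinner]
  have hdel_kap' (x : Fin 3 → A) :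
      del x kap = nabS (nabS x) 1 + c • x 1 - 2 * kap * nabS x 0 := by
    simp [hdel_kap, hinner]
  have hmem (x : Fin 3 → A) : (∃ Φ g h : A, Φ ∈ Set.range (fun f : A => f - D 0 f) ∧ x = pl Φ g h)
      ↔ D (-1) (del x lam) = 0 := by
    rw [exists_eq_pl_iff hD_comp hpl, del_lam_eq_D_one_sub hD_one hnabS hdel_lam', map_sub,
      D_D_of_add_eq hD_comp (neg_add_cancel 1), sub_eq_zero]
  refine ⟨fun x hx y hy => ?_, fun x hx f hf => ?_⟩
  · rw [Set.mem_ofPred_eq, hmem] at hx hy ⊢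
    have hnab := nab_eq hinner hnab_leib hnab_T hnab_N hnab_B
    rw [del_bracket_lam hD_leibniz hD_one hkap hnabS hdel_mul hdel_D hdel_lam' hdel_kap' hnab
      hbracket, map_sub, ← hdel_D x (-1) (del y lam), ← hdel_D y (-1) (del x lam), hy, hx,
      map_zero, map_zero, sub_zero]
  · have hds_del_lam : ds (del x lam) = 0 := by
      rw [hds, D_one_eq_zero_of_D_neg_one_eq_zero hD_comp ((hmem x).1 hx), mul_zero]
    refine map_mem_of_minimal_D_stable (hdel_mul x) (hdel_D x) hIbar_D hIbar_min ?_ hIbar_mem hf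
    rw [hdel_ds, hds_del_lam, zero_sub]
    exact neg_mem (Ideal.mul_mem_left _ _ hIbar_mem)

/-- (a) `X̄' = ℘(F × (X̄/A·T))` is closed under the bracket `[X, Y] = ∇_X Y − ∇_Y X`;
(b) every `X' ∈ X̄'` preserves the ideal `Ī` generated by `∂_s λ`:
`δ_{X'}(Ī) ⊆ Ī`.  Here `X̄` is realized as `Fin 3 → A`. -/
theorem ECL_Xbar_prime_subalgebra_preserves_ideal
    {A : Type*} [CommRing A] [Algebra ℝ A]
    -- ∂^ℤ-algebra structure on A
    (D : ℤ → A →ₗ[ℝ] A)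
    (hD_comp : ∀ (m n : ℤ) (f : A), D m (D n f) = D (m + n) f)
    (hD_leibniz : ∀ f g : A, D 1 (f * g) = D 1 f * g + f * D 1 g)
    (hD_parts : ∀ f g : A, D (-1) ((f - D 0 f) * g) = (f - D 0 f) * D (-1) g)
    -- the curvature `c` of the ambient space, and λ, κ, τ with λ, κ invertible
    (c : ℝ) (lam kap tau lamI kapI : A)
    (hlam : lam * lamI = 1) (hkap : kap * kapI = 1)
    -- A is generated by λ, κ, τ, λ⁻¹, κ⁻¹ as an ℝ-subalgebra closed under all ∂^m
    (hgen : ∀ S : Subalgebra ℝ A, lam ∈ S → kap ∈ S → tau ∈ S → lamI ∈ S → kapI ∈ S →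
      (∀ (m : ℤ), ∀ f ∈ S, D m f ∈ S) → S = ⊤)
    -- the free A-module X̄ with orthonormal basis T, N, B and its bilinear form
    (T N B : Fin 3 → A)
    (hT : T = ![1, 0, 0]) (hN : N = ![0, 1, 0]) (hB : B = ![0, 0, 1])
    (inner : (Fin 3 → A) → (Fin 3 → A) → A)
    (hinner : ∀ x y, inner x y = x 0 * y 0 + x 1 * y 1 + x 2 * y 2)
    -- ∂_s := λ⁻¹ ∂¹
    (ds : A → A) (hds : ∀ f, ds f = lamI * D 1 f)
    -- ∇_s, determined by the Leibniz rule and the Frenet–Serret relations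
    (nabS : (Fin 3 → A) →ₗ[ℝ] (Fin 3 → A))
    (hnabS_leib : ∀ (f : A) (x : Fin 3 → A), nabS (f • x) = ds f • x + f • nabS x)
    (hnabS_T : nabS T = kap • N)
    (hnabS_N : nabS N = -(kap • T) + tau • B)
    (hnabS_B : nabS B = -(tau • N))
    -- the variation operators δ_X, ℝ-linear in X
    (del : (Fin 3 → A) →ₗ[ℝ] A →ₗ[ℝ] A)
    (hdel_mul : ∀ (x : Fin 3 → A) (f g : A), del x (f * g) = del x f * g + f * del x g)
    (hdel_D : ∀ (x : Fin 3 → A) (m : ℤ) (f : A), del x (D m f) = D m (del x f))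
    (hdel_ds : ∀ (x : Fin 3 → A) (f : A),
      del x (ds f) = ds (del x f) - lamI * del x lam * ds f)
    (hdel_lam : ∀ x, del x lam = inner (lam • T) (nabS x))
    (hdel_kap : ∀ x, del x kap
      = inner N (nabS (nabS x) + c • x) - inner ((2 * kap) • T) (nabS x))
    (hdel_tau : ∀ x, del x tau
      = ds (inner (kapI • B) (nabS (nabS x) + c • x))
        + inner (kap • B) (nabS x) - inner (tau • T) (nabS x))
    -- the operators ∇_X
    (nab : (Fin 3 → A) → (Fin 3 → A) →ₗ[ℝ] (Fin 3 → A))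
    (hnab_leib : ∀ (x : Fin 3 → A) (f : A) (y : Fin 3 → A),
      nab x (f • y) = del x f • y + f • nab x y)
    (hnab_T : ∀ x, nab x T = inner N (nabS x) • N + inner B (nabS x) • B)
    (hnab_N : ∀ x, nab x N
      = inner (kapI • B) (nabS (nabS x) + c • x) • B - inner N (nabS x) • T)
    (hnab_B : ∀ x, nab x B
      = -(inner B (nabS x) • T) - inner (kapI • B) (nabS (nabS x) + c • x) • N)
    -- the bracket
    (bracket : (Fin 3 → A) → (Fin 3 → A) → (Fin 3 → A))
    (hbracket : ∀ x y, bracket x y = nab x y - nab y x)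
    -- F := ∫(A)
    (F : Set A) (hF : F = Set.range (fun f : A => f - D 0 f))
    -- Ī: the smallest ring ideal of A containing ∂_s λ and closed under every ∂^m
    (Ibar : Ideal A)
    (hIbar_mem : ds lam ∈ Ibar)
    (hIbar_D : ∀ (m : ℤ), ∀ f ∈ Ibar, D m f ∈ Ibar)
    (hIbar_min : ∀ J : Ideal A, ds lam ∈ J → (∀ (m : ℤ), ∀ f ∈ J, D m f ∈ J) → Ibar ≤ J)
    -- the injection ℘(Φ, g, h) = (∂⁻¹(λκg) + Φ)T + gN + hB and its image X̄'
    (pl : A → A → A → (Fin 3 → A))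
    (hpl : ∀ Φ g h : A, pl Φ g h = (D (-1) (lam * kap * g) + Φ) • T + g • N + h • B)
    (Xbar' : Set (Fin 3 → A))
    (hXbar' : Xbar' = {x | ∃ Φ g h : A, Φ ∈ F ∧ x = pl Φ g h}) :
    -- (a) X̄' is closed under the bracket
    (∀ x ∈ Xbar', ∀ y ∈ Xbar', bracket x y ∈ Xbar')
    -- (b) every X' ∈ X̄' preserves Ī
    ∧ (∀ x ∈ Xbar', ∀ f ∈ Ibar, del x f ∈ Ibar) :=
  ECL_Xbar_prime_subalgebra_preserves_ideal_general D hD_comp hD_leibniz c lam kap tau lamI kapI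
    hlam hkap T N B hT hN hB inner hinner ds hds nabS hnabS_leib hnabS_T hnabS_N hnabS_B del
    hdel_mul hdel_D hdel_ds hdel_lam hdel_kap nab hnab_leib hnab_T hnab_N hnab_B bracket hbracket F
    hF Ibar hIbar_mem hIbar_D hIbar_min pl hpl Xbar' hXbar'
end

section
/- Under these hypotheses, for all Φ ∈ F, X ∈ X̄ and Y, Y₁, Y₂ ∈ X̄: δ_{ΦX} f = Φ(δ_X f) for every f ∈ A; ∇_{ΦX} Y = Φ(∇_X Y); and δ_X⟨Y₁, Y₂⟩ = ⟨∇_X Y₁, Y₂⟩ + ⟨Y₁, ∇_X Y₂⟩. -/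
/-!
An element `Φ = f - ∂⁰ f` of `F` is a constant for the whole family `∂^m`: `∂¹ Φ = 0`, and the
Leibniz rule together with rule (iii) give `∂^m (Φ g) = Φ ∂^m g` for every `m`. Hence `∇_s`, and
with it the formulas for `δ_X λ, δ_X κ, δ_X τ`, are `F`-linear in `X`. The derivations `δ_{ΦX}` and
`Φ δ_X` both commute with every `∂^m`, so the subalgebra on which they agree is closed under the
`∂^m` and under inverses; it contains `λ, κ, τ`, so it is all of `A`. `F`-linearity of `∇_X`
follows on the frame and extends to `X̄` by the common Leibniz rule. Metric compatibility holds
because `∇_X` acts on the orthonormal frame `T, N, B` by a skew-symmetric matrix.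
-/

section IntegralCommutesWithD

variable {R A : Type*} [CommSemiring R] [Ring A] [Module R A] {D : ℤ → A →ₗ[R] A}

theorem D_one_sub_D_zero (hcomp : ∀ (m n : ℤ) (f : A), D m (D n f) = D (m + n) f) (f : A) :
    D 1 (f - D 0 f) = 0 := by
  rw [map_sub, hcomp, add_zero, sub_self]

theorem D_sub_D_zero_mul (hcomp : ∀ (m n : ℤ) (f : A), D m (D n f) = D (m + n) f)
    (hleibniz : ∀ f g : A, D 1 (f * g) = D 1 f * g + f * D 1 g)
    (hparts : ∀ f g : A, D (-1) ((f - D 0 f) * g) = (f - D 0 f) * D (-1) g)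
    (m : ℤ) (f g : A) : D m ((f - D 0 f) * g) = (f - D 0 f) * D m g := by
  induction m using Int.inductionOn' (b := -1) with
  | zero => exact hparts f g
  | succ k _ ih =>
    rw [add_comm, ← hcomp, ← hcomp, ih, hleibniz, D_one_sub_D_zero hcomp, zero_mul, zero_add]
  | pred k _ ih =>
    rw [sub_eq_neg_add, ← hcomp, ← hcomp, ih, hparts]

end IntegralCommutesWithD

namespace Derivation

variable {R A : Type*} [CommRing R] [CommRing A] [Algebra R A]

def eqLocus (d₁ d₂ : Derivation R A A) : Subalgebra R A where
  carrier := {a | d₁ a = d₂ a}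
  mul_mem' {a b} ha hb := by simp_all only [Set.mem_ofPred_eq, leibniz]
  add_mem' {a b} ha hb := by simp_all only [Set.mem_ofPred_eq, map_add]
  algebraMap_mem' r := by simp only [Set.mem_ofPred_eq, map_algebraMap]

variable {d₁ d₂ : Derivation R A A}

theorem mem_eqLocus {a : A} : a ∈ eqLocus d₁ d₂ ↔ d₁ a = d₂ a := Iff.rfl

theorem mem_eqLocus_of_mul_eq_one {a b : A} (hab : a * b = 1) (ha : a ∈ eqLocus d₁ d₂) :
    b ∈ eqLocus d₁ d₂ := by
  rw [mul_comm] at hab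
  rw [mem_eqLocus, leibniz_of_mul_eq_one _ hab, leibniz_of_mul_eq_one _ hab, mem_eqLocus.1 ha]

theorem map_mem_eqLocus {φ : A →ₗ[R] A} (h₁ : ∀ a, d₁ (φ a) = φ (d₁ a))
    (h₂ : ∀ a, d₂ (φ a) = φ (d₂ a)) {a : A} (ha : a ∈ eqLocus d₁ d₂) : φ a ∈ eqLocus d₁ d₂ := by
  rw [mem_eqLocus, h₁, h₂, mem_eqLocus.1 ha]

theorem ext_of_isGenerated {D : ℤ → A →ₗ[R] A} {lam kap tau lamI kapI : A}
    (hgen : ∀ S : Subalgebra R A, lam ∈ S → kap ∈ S → tau ∈ S → lamI ∈ S → kapI ∈ S →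
      (∀ (m : ℤ), ∀ f ∈ S, D m f ∈ S) → S = ⊤)
    (hlam : lam * lamI = 1) (hkap : kap * kapI = 1)
    (h₁ : ∀ m a, d₁ (D m a) = D m (d₁ a)) (h₂ : ∀ m a, d₂ (D m a) = D m (d₂ a))
    (h_lam : d₁ lam = d₂ lam) (h_kap : d₁ kap = d₂ kap) (h_tau : d₁ tau = d₂ tau) :
    d₁ = d₂ := by
  have htop := hgen (eqLocus d₁ d₂) h_lam h_kap h_tau (mem_eqLocus_of_mul_eq_one hlam h_lam)
    (mem_eqLocus_of_mul_eq_one hkap h_kap) fun m _ => map_mem_eqLocus (h₁ m) (h₂ m)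
  ext a
  exact (htop ▸ Algebra.mem_top : a ∈ eqLocus d₁ d₂)

end Derivation

section LeibnizOnPi

variable {A ι F : Type*} [CommRing A] [Fintype ι] [DecidableEq ι]
  [FunLike F (ι → A) (ι → A)] [AddMonoidHomClass F (ι → A) (ι → A)]

theorem apply_eq_sum_of_leibniz {d : A → A} {L : F}
    (hL : ∀ (f : A) (y : ι → A), L (f • y) = d f • y + f • L y) (y : ι → A) :
    L y = ∑ i, (d (y i) • Pi.single i 1 + y i • L (Pi.single i 1)) := by
  conv_lhs => rw [pi_eq_sum_univ' y]
  simp only [map_sum, hL]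

theorem ext_of_leibniz_of_single {d : A → A} {L₁ L₂ : F}
    (h₁ : ∀ (f : A) (y : ι → A), L₁ (f • y) = d f • y + f • L₁ y)
    (h₂ : ∀ (f : A) (y : ι → A), L₂ (f • y) = d f • y + f • L₂ y)
    (h : ∀ i, L₁ (Pi.single i 1) = L₂ (Pi.single i 1)) : L₁ = L₂ :=
  DFunLike.ext _ _ fun y => by
    rw [apply_eq_sum_of_leibniz h₁, apply_eq_sum_of_leibniz h₂]
    simp only [h]

theorem apply_apply_of_leibniz {d : A → A} {L : F}
    (hL : ∀ (f : A) (y : ι → A), L (f • y) = d f • y + f • L y) (y : ι → A) (j : ι) :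
    L y j = d (y j) + ∑ i, y i * L (Pi.single i 1) j := by
  rw [apply_eq_sum_of_leibniz hL]
  simp [Finset.sum_add_distrib, Pi.single_apply]

theorem Derivation.apply_dotProduct_eq_of_skew {R : Type*} [CommSemiring R] [Algebra R A]
    {d : Derivation R A A} {L : F}
    (hL : ∀ (f : A) (y : ι → A), L (f • y) = d f • y + f • L y)
    (hskew : ∀ i j, L (Pi.single i 1) j = -L (Pi.single j 1) i) (y₁ y₂ : ι → A) :
    d (y₁ ⬝ᵥ y₂) = L y₁ ⬝ᵥ y₂ + y₁ ⬝ᵥ L y₂ := by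
  have hcross : ∑ j, ∑ i, y₁ j * (y₂ i * L (Pi.single i 1) j)
      = -∑ j, ∑ i, y₁ i * L (Pi.single i 1) j * y₂ j := by
    rw [Finset.sum_comm, ← Finset.sum_neg_distrib]
    refine Finset.sum_congr rfl fun i _ => ?_
    rw [← Finset.sum_neg_distrib]
    refine Finset.sum_congr rfl fun j _ => ?_
    rw [hskew i j]
    ring
  have hd : ∀ j, d (y₁ j * y₂ j) = d (y₁ j) * y₂ j + y₁ j * d (y₂ j) := fun j => by
    rw [leibniz, smul_eq_mul, smul_eq_mul]
    ring
  simp only [dotProduct, map_sum, hd, apply_apply_of_leibniz hL y₁,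
    apply_apply_of_leibniz hL y₂, add_mul, mul_add, Finset.sum_add_distrib, Finset.sum_mul,
    Finset.mul_sum]
  linear_combination -hcross

end LeibnizOnPi

section FrenetFrame

variable {A : Type*} [CommRing A]

def frameRotation (a b k : A) : Fin 3 → Fin 3 → A :=
  ![a • Pi.single 1 1 + b • Pi.single 2 1, k • Pi.single 2 1 - a • Pi.single 0 1,
    -(b • Pi.single 0 1) - k • Pi.single 1 1]

theorem frameRotation_mul_left (Φ a b k : A) :
    frameRotation (Φ * a) (Φ * b) (Φ * k) = Φ • frameRotation a b k := by
  ext i j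
  fin_cases i <;> fin_cases j <;> simp [frameRotation]

theorem frameRotation_apply_skew (a b k : A) (i j : Fin 3) :
    frameRotation a b k i j = -frameRotation a b k j i := by
  fin_cases i <;> fin_cases j <;> simp [frameRotation]

end FrenetFrame

theorem ECL_F_linearity_and_metric_compatibility_general
    {A : Type*} [CommRing A] [Algebra ℝ A]
    -- ∂^ℤ-algebra structure on A
    (D : ℤ → A →ₗ[ℝ] A)
    (hD_comp : ∀ (m n : ℤ) (f : A), D m (D n f) = D (m + n) f)
    (hD_leibniz : ∀ f g : A, D 1 (f * g) = D 1 f * g + f * D 1 g)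
    (hD_parts : ∀ f g : A, D (-1) ((f - D 0 f) * g) = (f - D 0 f) * D (-1) g)
    -- the curvature `c` of the ambient space, and λ, κ, τ with λ, κ invertible
    (c : ℝ) (lam kap tau lamI kapI : A)
    (hlam : lam * lamI = 1) (hkap : kap * kapI = 1)
    -- A is generated by λ, κ, τ, λ⁻¹, κ⁻¹ as an ℝ-subalgebra closed under all ∂^m
    (hgen : ∀ S : Subalgebra ℝ A, lam ∈ S → kap ∈ S → tau ∈ S → lamI ∈ S → kapI ∈ S →
      (∀ (m : ℤ), ∀ f ∈ S, D m f ∈ S) → S = ⊤)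
    -- the free A-module X̄ with orthonormal basis T, N, B and its bilinear form
    (T N B : Fin 3 → A)
    (hT : T = ![1, 0, 0]) (hN : N = ![0, 1, 0]) (hB : B = ![0, 0, 1])
    (inner : (Fin 3 → A) → (Fin 3 → A) → A)
    (hinner : ∀ x y, inner x y = x 0 * y 0 + x 1 * y 1 + x 2 * y 2)
    -- ∂_s := λ⁻¹ ∂¹
    (ds : A → A) (hds : ∀ f, ds f = lamI * D 1 f)
    -- ∇_s, determined by the Leibniz rule and the Frenet–Serret relations
    (nabS : (Fin 3 → A) →ₗ[ℝ] (Fin 3 → A))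
    (hnabS_leib : ∀ (f : A) (x : Fin 3 → A), nabS (f • x) = ds f • x + f • nabS x)
    -- the variation operators δ_X, ℝ-linear in X
    (del : (Fin 3 → A) →ₗ[ℝ] A →ₗ[ℝ] A)
    (hdel_mul : ∀ (x : Fin 3 → A) (f g : A), del x (f * g) = del x f * g + f * del x g)
    (hdel_D : ∀ (x : Fin 3 → A) (m : ℤ) (f : A), del x (D m f) = D m (del x f))
    (hdel_lam : ∀ x, del x lam = inner (lam • T) (nabS x))
    (hdel_kap : ∀ x, del x kap
      = inner N (nabS (nabS x) + c • x) - inner ((2 * kap) • T) (nabS x))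
    (hdel_tau : ∀ x, del x tau
      = ds (inner (kapI • B) (nabS (nabS x) + c • x))
        + inner (kap • B) (nabS x) - inner (tau • T) (nabS x))
    -- the operators ∇_X
    (nab : (Fin 3 → A) → (Fin 3 → A) →ₗ[ℝ] (Fin 3 → A))
    (hnab_leib : ∀ (x : Fin 3 → A) (f : A) (y : Fin 3 → A),
      nab x (f • y) = del x f • y + f • nab x y)
    (hnab_T : ∀ x, nab x T = inner N (nabS x) • N + inner B (nabS x) • B)
    (hnab_N : ∀ x, nab x N
      = inner (kapI • B) (nabS (nabS x) + c • x) • B - inner N (nabS x) • T)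
    (hnab_B : ∀ x, nab x B
      = -(inner B (nabS x) • T) - inner (kapI • B) (nabS (nabS x) + c • x) • N)
    (F : Set A) (hF : F = Set.range (fun f : A => f - D 0 f)) :
    -- δ and ∇ are F-linear in the vector-field slot
    (∀ Φ ∈ F, ∀ (x : Fin 3 → A) (f : A), del (Φ • x) f = Φ * del x f)
    ∧ (∀ Φ ∈ F, ∀ (x y : Fin 3 → A), nab (Φ • x) y = Φ • nab x y)
    -- δ is compatible with the bilinear form via ∇
    ∧ (∀ (x y₁ y₂ : Fin 3 → A),
        del x (inner y₁ y₂) = inner (nab x y₁) y₂ + inner y₁ (nab x y₂)) := by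
  obtain rfl : inner = dotProduct :=
    funext₂ fun x y => by rw [hinner, dotProduct, Fin.sum_univ_three]
  obtain ⟨rfl, rfl, rfl⟩ : T = Pi.single 0 1 ∧ N = Pi.single 1 1 ∧ B = Pi.single 2 1 := by
    subst hT hN hB
    refine ⟨?_, ?_, ?_⟩ <;> ext i <;> fin_cases i <;> rfl
  subst hF
  have hD_mul := D_sub_D_zero_mul hD_comp hD_leibniz hD_parts
  have hds_mul (p g : A) : ds ((p - D 0 p) * g) = (p - D 0 p) * ds g := by
    rw [hds, hds, hD_mul, mul_left_comm]
  have hnabS_smul (p : A) (x : Fin 3 → A) : nabS ((p - D 0 p) • x) = (p - D 0 p) • nabS x := by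
    rw [hnabS_leib, hds, D_one_sub_D_zero hD_comp, mul_zero, zero_smul, zero_add]
  have hnabS2_smul (p : A) (x : Fin 3 → A) : nabS (nabS ((p - D 0 p) • x)) + c • (p - D 0 p) • x
      = (p - D 0 p) • (nabS (nabS x) + c • x) := by
    rw [hnabS_smul, hnabS_smul, smul_add, smul_comm c]
  let δ (x : Fin 3 → A) : Derivation ℝ A A :=
    Derivation.mk' (del x) fun f g => by simp only [hdel_mul, smul_eq_mul]; ring
  have hδ_smul (p : A) (x : Fin 3 → A) : δ ((p - D 0 p) • x) = (p - D 0 p) • δ x := by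
    refine Derivation.ext_of_isGenerated hgen hlam hkap (hdel_D _) (fun m f => ?_) ?_ ?_ ?_ <;>
      simp only [δ, Derivation.coe_mk', Derivation.smul_apply, smul_eq_mul]
    · rw [hdel_D, hD_mul]
    · rw [hdel_lam, hdel_lam, hnabS_smul, dotProduct_smul, smul_eq_mul]
    · rw [hdel_kap, hdel_kap, hnabS2_smul, hnabS_smul]
      simp only [dotProduct_smul, smul_eq_mul, mul_sub]
    · rw [hdel_tau, hdel_tau, hnabS2_smul, hnabS_smul]
      simp only [dotProduct_smul, smul_eq_mul, hds_mul, mul_add, mul_sub]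
  have hdel_smul (p : A) (x : Fin 3 → A) (f : A) :
      del ((p - D 0 p) • x) f = (p - D 0 p) * del x f :=
    DFunLike.congr_fun (hδ_smul p x) f
  have hframe (x : Fin 3 → A) (i : Fin 3) : nab x (Pi.single i 1) = frameRotation
      (Pi.single 1 1 ⬝ᵥ nabS x) (Pi.single 2 1 ⬝ᵥ nabS x)
      (kapI • Pi.single 2 1 ⬝ᵥ (nabS (nabS x) + c • x)) i := by
    fin_cases i
    exacts [hnab_T x, hnab_N x, hnab_B x]
  refine ⟨?_, ?_, fun x y₁ y₂ => Derivation.apply_dotProduct_eq_of_skew (d := δ x)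
    (hnab_leib x) (fun i j => by rw [hframe, hframe]; exact frameRotation_apply_skew ..) y₁ y₂⟩
  · rintro _ ⟨p, rfl⟩
    exact hdel_smul p
  · rintro _ ⟨p, rfl⟩ x y
    refine LinearMap.congr_fun (?_ : nab ((p - D 0 p) • x) = (p - D 0 p) • nab x) y
    refine ext_of_leibniz_of_single (d := fun f => (p - D 0 p) * del x f)
      (fun f z => by rw [hnab_leib, hdel_smul]) (fun f z => ?_) fun i => ?_
    · rw [LinearMap.smul_apply, LinearMap.smul_apply, hnab_leib, smul_add, smul_smul, smul_comm]
    · rw [LinearMap.smul_apply, hframe, hframe, hnabS2_smul, hnabS_smul]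
      simp only [dotProduct_smul, smul_eq_mul, frameRotation_mul_left, Pi.smul_apply]

/-- For all `Φ ∈ F`, `X, Y, Y₁, Y₂ ∈ X̄` (realized as `Fin 3 → A`):
`δ_{ΦX} f = Φ (δ_X f)`, `∇_{ΦX} Y = Φ (∇_X Y)`, and
`δ_X ⟨Y₁, Y₂⟩ = ⟨∇_X Y₁, Y₂⟩ + ⟨Y₁, ∇_X Y₂⟩`. -/
theorem ECL_F_linearity_and_metric_compatibility
    {A : Type*} [CommRing A] [Algebra ℝ A]
    -- ∂^ℤ-algebra structure on A
    (D : ℤ → A →ₗ[ℝ] A)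
    (hD_comp : ∀ (m n : ℤ) (f : A), D m (D n f) = D (m + n) f)
    (hD_leibniz : ∀ f g : A, D 1 (f * g) = D 1 f * g + f * D 1 g)
    (hD_parts : ∀ f g : A, D (-1) ((f - D 0 f) * g) = (f - D 0 f) * D (-1) g)
    -- the curvature `c` of the ambient space, and λ, κ, τ with λ, κ invertible
    (c : ℝ) (lam kap tau lamI kapI : A)
    (hlam : lam * lamI = 1) (hkap : kap * kapI = 1)
    -- A is generated by λ, κ, τ, λ⁻¹, κ⁻¹ as an ℝ-subalgebra closed under all ∂^m
    (hgen : ∀ S : Subalgebra ℝ A, lam ∈ S → kap ∈ S → tau ∈ S → lamI ∈ S → kapI ∈ S →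
      (∀ (m : ℤ), ∀ f ∈ S, D m f ∈ S) → S = ⊤)
    -- the free A-module X̄ with orthonormal basis T, N, B and its bilinear form
    (T N B : Fin 3 → A)
    (hT : T = ![1, 0, 0]) (hN : N = ![0, 1, 0]) (hB : B = ![0, 0, 1])
    (inner : (Fin 3 → A) → (Fin 3 → A) → A)
    (hinner : ∀ x y, inner x y = x 0 * y 0 + x 1 * y 1 + x 2 * y 2)
    -- ∂_s := λ⁻¹ ∂¹
    (ds : A → A) (hds : ∀ f, ds f = lamI * D 1 f)
    -- ∇_s, determined by the Leibniz rule and the Frenet–Serret relations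
    (nabS : (Fin 3 → A) →ₗ[ℝ] (Fin 3 → A))
    (hnabS_leib : ∀ (f : A) (x : Fin 3 → A), nabS (f • x) = ds f • x + f • nabS x)
    (hnabS_T : nabS T = kap • N)
    (hnabS_N : nabS N = -(kap • T) + tau • B)
    (hnabS_B : nabS B = -(tau • N))
    -- the variation operators δ_X, ℝ-linear in X
    (del : (Fin 3 → A) →ₗ[ℝ] A →ₗ[ℝ] A)
    (hdel_mul : ∀ (x : Fin 3 → A) (f g : A), del x (f * g) = del x f * g + f * del x g)
    (hdel_D : ∀ (x : Fin 3 → A) (m : ℤ) (f : A), del x (D m f) = D m (del x f))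
    (hdel_ds : ∀ (x : Fin 3 → A) (f : A),
      del x (ds f) = ds (del x f) - lamI * del x lam * ds f)
    (hdel_lam : ∀ x, del x lam = inner (lam • T) (nabS x))
    (hdel_kap : ∀ x, del x kap
      = inner N (nabS (nabS x) + c • x) - inner ((2 * kap) • T) (nabS x))
    (hdel_tau : ∀ x, del x tau
      = ds (inner (kapI • B) (nabS (nabS x) + c • x))
        + inner (kap • B) (nabS x) - inner (tau • T) (nabS x))
    -- the operators ∇_X
    (nab : (Fin 3 → A) → (Fin 3 → A) →ₗ[ℝ] (Fin 3 → A))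
    (hnab_leib : ∀ (x : Fin 3 → A) (f : A) (y : Fin 3 → A),
      nab x (f • y) = del x f • y + f • nab x y)
    (hnab_T : ∀ x, nab x T = inner N (nabS x) • N + inner B (nabS x) • B)
    (hnab_N : ∀ x, nab x N
      = inner (kapI • B) (nabS (nabS x) + c • x) • B - inner N (nabS x) • T)
    (hnab_B : ∀ x, nab x B
      = -(inner B (nabS x) • T) - inner (kapI • B) (nabS (nabS x) + c • x) • N)
    (F : Set A) (hF : F = Set.range (fun f : A => f - D 0 f)) :
    -- δ and ∇ are F-linear in the vector-field slot
    (∀ Φ ∈ F, ∀ (x : Fin 3 → A) (f : A), del (Φ • x) f = Φ * del x f)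
    ∧ (∀ Φ ∈ F, ∀ (x y : Fin 3 → A), nab (Φ • x) y = Φ • nab x y)
    -- δ is compatible with the bilinear form via ∇
    ∧ (∀ (x y₁ y₂ : Fin 3 → A),
        del x (inner y₁ y₂) = inner (nab x y₁) y₂ + inner y₁ (nab x y₂)) :=
  ECL_F_linearity_and_metric_compatibility_general D hD_comp hD_leibniz hD_parts c lam kap tau lamI
    kapI hlam hkap hgen T N B hT hN hB inner hinner ds hds nabS hnabS_leib del hdel_mul hdel_D
    hdel_lam hdel_kap hdel_tau nab hnab_leib hnab_T hnab_N hnab_B F hF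
end

section
/- Both J and K are F-linear (i.e. J(Φx) = Φ(Jx) and K(Φx) = Φ(Kx) for Φ ∈ F, x ∈ X) and skew-adjoint with respect to the pairing: (Jx, y) = −(x, Jy) and (Kx, y) = −(x, Ky) for all x, y ∈ X. -/
/-- The operators `J(gN + hB) = hN − gB` and
`K(gN + hB) = (τh − ∂_s g)N − (∂_s h + τg + κ ∂⁻¹(λκh))B` on `X = A·N ⊕ A·B`
(realized as `A × A`) are `F`-linear and skew-adjoint with respect to the pairing
`(g₁N + h₁B, g₂N + h₂B) = ∫(λ(g₁g₂ + h₁h₂))`.  Here `∫ f := f - ∂⁰ f`, `F := ∫(A)`. -/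
theorem ECL_J_K_skew_adjoint
    {A : Type*} [CommRing A] [Algebra ℝ A]
    -- ∂^ℤ-algebra structure on A
    (D : ℤ → A →ₗ[ℝ] A)
    (hD_comp : ∀ (m n : ℤ) (f : A), D m (D n f) = D (m + n) f)
    (hD_leibniz : ∀ f g : A, D 1 (f * g) = D 1 f * g + f * D 1 g)
    (hD_parts : ∀ f g : A, D (-1) ((f - D 0 f) * g) = (f - D 0 f) * D (-1) g)
    -- λ, κ, τ with λ, κ invertible
    (lam kap tau lamI kapI : A)
    (hlam : lam * lamI = 1) (hkap : kap * kapI = 1)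
    -- ∂_s := λ⁻¹ ∂¹
    (ds : A → A) (hds : ∀ f, ds f = lamI * D 1 f)
    (F : Set A) (hF : F = Set.range (fun f : A => f - D 0 f))
    -- the pairing on X = A·N ⊕ A·B, realized as A × A
    (P : A × A → A × A → A)
    (hP : ∀ x y : A × A,
      P x y = lam * (x.1 * y.1 + x.2 * y.2) - D 0 (lam * (x.1 * y.1 + x.2 * y.2)))
    -- the operators J and K
    (J : A × A → A × A) (hJ : ∀ x : A × A, J x = (x.2, -x.1))
    (K : A × A → A × A)
    (hK : ∀ x : A × A,
      K x = (tau * x.2 - ds x.1, -(ds x.2 + tau * x.1 + kap * D (-1) (lam * kap * x.2)))) :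
    -- F-linearity
    (∀ Φ ∈ F, ∀ x : A × A, J (Φ • x) = Φ • J x)
    ∧ (∀ Φ ∈ F, ∀ x : A × A, K (Φ • x) = Φ • K x)
    -- skew-adjointness
    ∧ (∀ x y : A × A, P (J x) y = - P x (J y))
    ∧ (∀ x y : A × A, P (K x) y = - P x (K y)) := by
  -- basic consequences of the composition law
  have h01 : ∀ f, D 0 (D 1 f) = D 1 f := fun f => by simpa using hD_comp 0 1 f
  have h0m1 : ∀ f, D 0 (D (-1) f) = D (-1) f := fun f => by simpa using hD_comp 0 (-1) f
  have h1m1 : ∀ f, D 1 (D (-1) f) = D 0 f := fun f => by simpa using hD_comp 1 (-1) f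
  have h10 : ∀ f, D 1 (D 0 f) = D 1 f := fun f => by simpa using hD_comp 1 0 f
  have hD1F : ∀ f, D 1 (f - D 0 f) = 0 := fun f => by rw [map_sub, h10, sub_self]
  refine ⟨?_, ?_, ?_, ?_⟩
  · -- J is F-linear (in fact A-linear)
    intro Φ hΦ x
    simp [hJ, Prod.smul_def, smul_eq_mul, mul_neg]
  · -- K is F-linear
    intro Φ hΦ x
    rw [hF] at hΦ
    obtain ⟨f, rfl⟩ := hΦ
    simp only
    have hmul1 : ∀ g : A, D 1 ((f - D 0 f) * g) = (f - D 0 f) * D 1 g := by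
      intro g; rw [hD_leibniz, hD1F, zero_mul, zero_add]
    have hmulm1 : ∀ g : A, D (-1) ((f - D 0 f) * g) = (f - D 0 f) * D (-1) g :=
      hD_parts f
    have e2 : lam * kap * ((f - D 0 f) * x.2) = (f - D 0 f) * (lam * kap * x.2) := by ring
    rw [hK, hK]
    have hx1 : ((f - D 0 f) • x).1 = (f - D 0 f) * x.1 := rfl
    have hx2 : ((f - D 0 f) • x).2 = (f - D 0 f) * x.2 := rfl
    rw [hx1, hx2, e2, hmulm1, Prod.smul_def, Prod.mk.injEq]
    simp only [hds, hmul1, smul_eq_mul]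
    constructor <;> ring
  · -- J is skew-adjoint
    intro x y
    obtain ⟨g, h⟩ := x
    obtain ⟨p, q⟩ := y
    rw [hJ, hJ, hP, hP]
    simp only
    have e : lam * (h * p + -g * q) = -(lam * (g * q + h * -p)) := by ring
    rw [e, map_neg]
    ring
  · -- K is skew-adjoint
    intro x y
    obtain ⟨g, h⟩ := x
    obtain ⟨p, q⟩ := y
    rw [hK, hK, hP, hP]
    simp only
    set a : A := lam * kap * h with ha
    set b : A := lam * kap * q with hb
    set u : A := D (-1) a with hu
    set v : A := D (-1) b with hv
    have hD1u : D 1 u = D 0 a := by rw [hu, h1m1]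
    have hD1v : D 1 v = D 0 b := by rw [hv, h1m1]
    have hpart1 : D (-1) ((b - D 0 b) * a) = (b - D 0 b) * u := by rw [hD_parts, hu]
    have hpart2 : D (-1) ((a - D 0 a) * b) = (a - D 0 a) * v := by rw [hD_parts, hv]
    -- the sum of the two integrands is a sum of exact terms
    have hsum : lam * ((tau * h - ds g) * p + -(ds h + tau * g + kap * u) * q)
          + lam * (g * (tau * q - ds p) + h * -(ds q + tau * p + kap * v)) =
        -(D 1 (g * p)) - D 1 (h * q) - D 1 (u * v)
          - (D (-1) ((b - D 0 b) * a) + D (-1) ((a - D 0 a) * b)) := by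
      rw [hds g, hds h, hds p, hds q, hD_leibniz g p, hD_leibniz h q, hD_leibniz u v,
        hD1u, hD1v, hpart1, hpart2]
      linear_combination (-(D 1 g * p + g * D 1 p + D 1 h * q + h * D 1 q)) * hlam
    have hE0 : D 0 (-(D 1 (g * p)) - D 1 (h * q) - D 1 (u * v)
          - (D (-1) ((b - D 0 b) * a) + D (-1) ((a - D 0 a) * b))) =
        -(D 1 (g * p)) - D 1 (h * q) - D 1 (u * v)
          - (D (-1) ((b - D 0 b) * a) + D (-1) ((a - D 0 a) * b)) := by
      simp only [map_sub, map_add, map_neg, h01, h0m1]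
    have hadd : D 0 (lam * ((tau * h - ds g) * p + -(ds h + tau * g + kap * u) * q)
          + lam * (g * (tau * q - ds p) + h * -(ds q + tau * p + kap * v))) =
        D 0 (lam * ((tau * h - ds g) * p + -(ds h + tau * g + kap * u) * q))
          + D 0 (lam * (g * (tau * q - ds p) + h * -(ds q + tau * p + kap * v))) :=
      map_add _ _ _
    have hcong := congrArg (D 0) hsum
    linear_combination hsum + hadd - hcong - hE0
end

section
/- J^{-1} is skew-adjoint: B(J^{-1}x, y) = −B(x, J^{-1}y) for all x, y ∈ M; and, setting M₀ := J^{-1}∘K, one has B(M₀^i x, J(M₀^j x)) = 0 for all integers i, j ≥ 0 and all x ∈ M. In particular, each operator J∘(J^{-1}∘K)^n (n ≥ 0) is skew-adjoint with respect to B. -/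
/-- Let `R` be a commutative ring in which `2` is a unit, `M` an `R`-module, `B` a symmetric
`R`-bilinear form on `M`, and `J, K` skew-adjoint `R`-linear operators with `J` bijective.
Then `J⁻¹` is skew-adjoint; with `M₀ := J⁻¹ ∘ K`, `B(M₀^i x, J(M₀^j x)) = 0` for all
`i, j ≥ 0` and all `x`; in particular each `J ∘ (J⁻¹ ∘ K)^n` is skew-adjoint. -/
theorem skew_adjoint_recursion_operators
    {R : Type*} [CommRing R] {M : Type*} [AddCommGroup M] [Module R M]
    (h2 : IsUnit (2 : R))
    (B : M →ₗ[R] M →ₗ[R] R) (hB_symm : ∀ x y : M, B x y = B y x)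
    (J : M ≃ₗ[R] M) (K : M →ₗ[R] M)
    (hJ_skew : ∀ x y : M, B (J x) y = - B x (J y))
    (hK_skew : ∀ x y : M, B (K x) y = - B x (K y)) :
    (∀ x y : M, B (J.symm x) y = - B x (J.symm y))
    ∧ (∀ (i j : ℕ) (x : M),
        B (((J.symm.toLinearMap ∘ₗ K) ^ i) x) (J (((J.symm.toLinearMap ∘ₗ K) ^ j) x)) = 0)
    ∧ (∀ (n : ℕ) (x y : M),
        B ((J.toLinearMap ∘ₗ (J.symm.toLinearMap ∘ₗ K) ^ n) x) y
          = - B x ((J.toLinearMap ∘ₗ (J.symm.toLinearMap ∘ₗ K) ^ n) y)) := by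
  set T : M →ₗ[R] M := J.symm.toLinearMap ∘ₗ K with hTdef
  have hJT : ∀ z : M, J (T z) = K z := by
    intro z
    simp [hTdef]
  have hskew : ∀ (n : ℕ) (x y : M), B (J ((T ^ n) x)) y = - B x (J ((T ^ n) y)) := by
    intro n
    induction n with
    | zero => intro x y; simpa using hJ_skew x y
    | succ n ih =>
      intro x y
      have hpow1 : ∀ z : M, (T ^ (n + 1)) z = T ((T ^ n) z) := by
        intro z; rw [pow_succ', Module.End.mul_apply]
      have hpow2 : ∀ z : M, (T ^ (n + 1)) z = (T ^ n) (T z) := by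
        intro z; rw [pow_succ, Module.End.mul_apply]
      calc B (J ((T ^ (n + 1)) x)) y
          = B (K ((T ^ n) x)) y := by rw [hpow1, hJT]
        _ = - B ((T ^ n) x) (K y) := hK_skew _ _
        _ = - B ((T ^ n) x) (J (T y)) := by rw [hJT]
        _ = B (J ((T ^ n) x)) (T y) := by
            linear_combination - hJ_skew ((T ^ n) x) (T y)
        _ = - B x (J ((T ^ n) (T y))) := ih x (T y)
        _ = - B x (J ((T ^ (n + 1)) y)) := by rw [hpow2]
  have hzero : ∀ (m : ℕ) (x : M), B x (J ((T ^ m) x)) = 0 := by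
    intro m x
    have h1 := hskew m x x
    have hs := hB_symm (J ((T ^ m) x)) x
    have h3 : (2 : R) * B x (J ((T ^ m) x)) = (2 : R) * 0 := by
      linear_combination h1 - hs
    exact h2.mul_left_cancel h3
  refine ⟨?_, ?_, ?_⟩
  · intro x y
    have h := hJ_skew (J.symm x) (J.symm y)
    simp only [LinearEquiv.apply_symm_apply] at h
    linear_combination h
  · intro i j x
    have hc : (T ^ (j + i)) x = (T ^ j) ((T ^ i) x) := by
      rw [pow_add, Module.End.mul_apply]
    have h5 := hskew (j + i) x x
    have h6 := hzero (j + i) x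
    have h7 := hskew j ((T ^ i) x) x
    rw [← hc] at h7
    linear_combination h7 - h5 + h6
  · intro n x y
    simpa using hskew n x y
end

section
/- Suppose Λ ∈ F and f₁, …, f_m ∈ F satisfy df_n = ξ_n + Σ_{k∈ℤ, 1<k<n} (1 − k)(f_k ξ_{n−k} − Λ f_{k−1} ξ_{n−k−1}) for 1 ≤ n ≤ m. Then the functions ℓ, f₁, …, f_m are pairwise in involution with respect to the Poisson bracket {Φ, Ψ} := (J(*dΦ))Ψ, i.e. {f_i, f_j} = 0 for all 1 ≤ i, j ≤ m and {ℓ, f_n} = 0 for all 1 ≤ n ≤ m. -/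
/-- If `Λ ∈ F` and `f₁, …, f_m ∈ F` satisfy
`df_n = ξ_n + Σ_{1<k<n} (1 − k)(f_k ξ_{n−k} − Λ f_{k−1} ξ_{n−k−1})` for `1 ≤ n ≤ m`, where
`ξ_n(Y) = ℓ^{n−1}·dℓ((K∘J⁻¹)^n Y)`, then `ℓ, f₁, …, f_m` are pairwise in involution for the
Poisson bracket `{Φ, Ψ} = (J(*dΦ))Ψ`. -/
theorem functions_in_involution
    {F : Type*} [CommRing F] [Algebra ℝ F]
    {X : Type*} [LieRing X] [LieAlgebra ℝ X] [Module F X] [IsScalarTower ℝ F X]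
    -- the action of X on F by ℝ-derivations
    (act : X →ₗ[ℝ] F →ₗ[ℝ] F)
    (hact_deriv : ∀ (x : X) (Φ Ψ : F), act x (Φ * Ψ) = act x Φ * Ψ + Φ * act x Ψ)
    (hact_Fsmul : ∀ (Φ : F) (x : X) (Ψ : F), act (Φ • x) Ψ = Φ * act x Ψ)
    (hact_lie : ∀ (x y : X) (Φ : F), act ⁅x, y⁆ Φ = act x (act y Φ) - act y (act x Φ))
    (hbracket_smul : ∀ (x y : X) (Φ : F), ⁅x, Φ • y⁆ = act x Φ • y + Φ • ⁅x, y⁆)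
    -- the nondegenerate symmetric F-bilinear form
    (P : X → X → F)
    (hP_symm : ∀ x y : X, P x y = P y x)
    (hP_add : ∀ x y z : X, P (x + y) z = P x z + P y z)
    (hP_smul : ∀ (Φ : F) (x y : X), P (Φ • x) y = Φ * P x y)
    (hP_nondeg : ∀ x : X, (∀ y : X, P x y = 0) → x = 0)
    -- the skew-adjoint F-linear operators J (bijective) and K
    (J : X ≃ₗ[F] X) (K : X →ₗ[F] X)
    (hJ_skew : ∀ x y : X, P (J x) y = - P x (J y))
    (hK_skew : ∀ x y : X, P (K x) y = - P x (K y))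
    -- the unit ℓ of F, with a gradient of dℓ
    (l : Fˣ) (gradl : X) (hgradl : ∀ y : X, P gradl y = act y (l : F))
    -- the 1-forms ξ_n(Y) = ℓ^{n−1}·dℓ((K∘J⁻¹)^n Y)
    (ξ : ℕ → X → F)
    (hξ : ∀ (n : ℕ) (y : X),
      ξ n y = ((l ^ ((n : ℤ) - 1) : Fˣ) : F)
        * act (((K ∘ₗ J.symm.toLinearMap) ^ n) y) (l : F))
    -- the functions f₁, …, f_m and the recursion df_n = ξ_n + Σ (1−k)(f_k ξ_{n−k} − Λ f_{k−1} ξ_{n−k−1})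
    (Λ : F) (m : ℕ) (f : ℕ → F)
    (hdf : ∀ n, 1 ≤ n → n ≤ m → ∀ x : X,
      act x (f n) = ξ n x
        + ∑ k ∈ Finset.filter (fun k => 1 < k ∧ k < n) (Finset.range n),
            (1 - (k : ℤ)) • (f k * ξ (n - k) x - Λ * f (k - 1) * ξ (n - k - 1) x))
    -- each df_n admits a gradient
    (gradf : ℕ → X)
    (hgradf : ∀ n, 1 ≤ n → n ≤ m → ∀ y : X, P (gradf n) y = act y (f n)) :
    -- {f_i, f_j} = 0 and {ℓ, f_n} = 0, where {Φ, Ψ} = (J(*dΦ))Ψ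
    (∀ i j, 1 ≤ i → i ≤ m → 1 ≤ j → j ≤ m → act (J (gradf i)) (f j) = 0)
    ∧ (∀ n, 1 ≤ n → n ≤ m → act (J gradl) (f n) = 0) := by
  classical
  -- second-argument linearity of P
  have hP_smul2 : ∀ (c : F) (x y : X), P x (c • y) = c * P x y := by
    intro c x y; rw [hP_symm, hP_smul, hP_symm]
  -- skewness of J⁻¹
  have hJsymm_skew : ∀ x y : X, P (J.symm x) y = - P x (J.symm y) := by
    intro x y
    have h := hJ_skew (J.symm x) (J.symm y)
    rw [J.apply_symm_apply, J.apply_symm_apply] at h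
    linear_combination h
  set T : X →ₗ[F] X := J.symm.toLinearMap ∘ₗ K with hT
  set S : X →ₗ[F] X := K ∘ₗ J.symm.toLinearMap with hS
  have hstep : ∀ x y : X, P (T x) y = P x (S y) := by
    intro x y
    show P (J.symm (K x)) y = P x (K (J.symm y))
    rw [hJsymm_skew, hK_skew, neg_neg]
  have hadj : ∀ (n : ℕ) (x y : X), P ((T ^ n) x) y = P x ((S ^ n) y) := by
    intro n
    induction n with
    | zero => intro x y; simp
    | succ n ih =>
      intro x y
      rw [pow_succ', pow_succ, Module.End.mul_apply, Module.End.mul_apply,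
        hstep, ih]
  -- the gradients of the ξ's
  set g : ℕ → X := fun n => ((l ^ ((n : ℤ) - 1) : Fˣ) : F) • ((T ^ n) gradl) with hgdef
  have hg : ∀ (n : ℕ) (y : X), P (g n) y = ξ n y := by
    intro n y
    rw [hξ]
    show P (((l ^ ((n : ℤ) - 1) : Fˣ) : F) • ((T ^ n) gradl)) y = _
    rw [hP_smul, hadj, hgradl]
  -- the Lenard ladder
  have hladder : ∀ n : ℕ, J (g (n + 1)) = (l : F) • K (g n) := by
    intro n
    show J (((l ^ (((n : ℕ) + 1 : ℤ) - 1) : Fˣ) : F) • ((T ^ (n + 1)) gradl))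
      = (l : F) • K (((l ^ ((n : ℤ) - 1) : Fˣ) : F) • ((T ^ n) gradl))
    rw [map_smul, map_smul, smul_smul]
    have hc : ((l ^ (((n : ℕ) + 1 : ℤ) - 1) : Fˣ) : F)
        = (l : F) * ((l ^ ((n : ℤ) - 1) : Fˣ) : F) := by
      rw [← Units.val_mul]
      congr 1
      have he : ((n : ℕ) + 1 : ℤ) - 1 = 1 + ((n : ℤ) - 1) := by push_cast; ring
      rw [he, zpow_add, zpow_one]
    rw [hc]
    congr 1
    rw [pow_succ', Module.End.mul_apply]
    show J (J.symm (K ((T ^ n) gradl))) = K ((T ^ n) gradl)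
    exact J.apply_symm_apply _
  -- the pairing ω and its vanishing
  set ω : ℕ → ℕ → F := fun i j => P (g i) (J (g j)) with hωdef
  have hanti : ∀ i j, ω i j = - ω j i := by
    intro i j
    show P (g i) (J (g j)) = - P (g j) (J (g i))
    rw [hP_symm, hJ_skew]
  have hshift : ∀ i j, ω i (j + 1) = ω (i + 1) j := by
    intro i j
    show P (g i) (J (g (j + 1))) = P (g (i + 1)) (J (g j))
    rw [hladder, hP_smul2]
    have h1 : P (g i) (K (g j)) = - P (K (g i)) (g j) := by
      rw [hK_skew, neg_neg, hP_symm]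
    rw [h1]
    have h2 : P (J (g (i + 1))) (g j) = - P (g (i + 1)) (J (g j)) := hJ_skew _ _
    have h3 : (l : F) • K (g i) = J (g (i + 1)) := (hladder i).symm
    calc (l : F) * - P (K (g i)) (g j)
        = - ((l : F) * P (K (g i)) (g j)) := by ring
      _ = - P ((l : F) • K (g i)) (g j) := by rw [hP_smul]
      _ = - P (J (g (i + 1))) (g j) := by rw [h3]
      _ = P (g (i + 1)) (J (g j)) := by rw [h2, neg_neg]
  have hsum : ∀ j i, ω i j = ω (i + j) 0 := by
    intro j
    induction j with
    | zero => intro i; rfl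
    | succ j ih =>
      intro i
      rw [hshift, ih]
      congr 1
      omega
  have hωzero : ∀ i j, ω i j = 0 := by
    intro i j
    have e1 : ω i j = ω (i + j) 0 := hsum j i
    have e2 : ω j i = ω (i + j) 0 := by rw [hsum i j, Nat.add_comm]
    have h1 : ω i j = - ω i j := by
      calc ω i j = - ω j i := hanti i j
        _ = - ω (i + j) 0 := by rw [e2]
        _ = - ω i j := by rw [← e1]
    have h2 : (2 : ℝ) • ω i j = 0 := by
      rw [two_smul]
      linear_combination h1
    have := congrArg (fun z : F => ((2 : ℝ)⁻¹) • z) h2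
    simpa [smul_smul] using this
  -- key vanishing lemma
  have key : ∀ x : X, (∀ α : ℕ, ξ α x = 0) → ∀ n, 1 ≤ n → n ≤ m → act x (f n) = 0 := by
    intro x hx n h1 h2
    rw [hdf n h1 h2 x]
    simp [hx]
  have hξJg : ∀ (j α : ℕ), ξ α (J (g j)) = 0 := by
    intro j α
    rw [← hg]
    exact hωzero α j
  have hactJg : ∀ (j : ℕ) (n : ℕ), 1 ≤ n → n ≤ m → act (J (g j)) (f n) = 0 := by
    intro j n h1 h2
    exact key _ (hξJg j) n h1 h2
  have hξJgradf : ∀ (i : ℕ), 1 ≤ i → i ≤ m → ∀ α : ℕ, ξ α (J (gradf i)) = 0 := by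
    intro i h1 h2 α
    rw [← hg]
    rw [hP_symm, hJ_skew, neg_eq_zero, hgradf i h1 h2]
    exact hactJg α i h1 h2
  constructor
  · intro i j hi1 hi2 hj1 hj2
    exact key _ (hξJgradf i hi1 hi2) j hj1 hj2
  · intro n h1 h2
    have hg0 : gradl = (l : F) • g 0 := by
      show gradl = (l : F) • (((l ^ ((0 : ℤ) - 1) : Fˣ) : F) • ((T ^ 0) gradl))
      rw [smul_smul, ← Units.val_mul]
      norm_num
    rw [hg0, map_smul, hact_Fsmul, hactJg 0 n h1 h2, mul_zero]
end

section
/- Let H₁, H₂ : X → X be skew-adjoint F-linear operators and let ξ, η, ζ be 1-forms admitting gradients *ξ, *η, *ζ such that H₁(*ξ) = H₂(*η) and H₁(*η) = H₂(*ζ). Then for all X, Y ∈ X: 2( dξ(H₁X, H₁Y) − dη(H₁X, H₂Y) − dη(H₂X, H₁Y) + dζ(H₂X, H₂Y) ) = [H₁,H₁](*ξ, X, Y) − 2[H₁,H₂](*η, X, Y) + [H₂,H₂](*ζ, X, Y). -/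
/-- The dual Schouten bracket of two skew-adjoint `F`-linear operators `G₁, G₂` on a
Lie–Rinehart algebra `(F, X)` with `F`-bilinear form `P` and anchor `act`. -/
def dualSchouten {F : Type*} [CommRing F] {X : Type*} [LieRing X]
    [Module F X] (act : X → F → F) (P : X → X → F)
    (G₁ G₂ : X →ₗ[F] X) (x y z : X) : F :=
  (act (G₁ x) (P (G₂ y) z) + P z ⁅G₁ y, G₂ x⁆
    + act (G₂ x) (P (G₁ y) z) + P z ⁅G₂ y, G₁ x⁆)
  + (act (G₁ y) (P (G₂ z) x) + P x ⁅G₁ z, G₂ y⁆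
    + act (G₂ y) (P (G₁ z) x) + P x ⁅G₂ z, G₁ y⁆)
  + (act (G₁ z) (P (G₂ x) y) + P y ⁅G₁ x, G₂ z⁆
    + act (G₂ z) (P (G₁ x) y) + P y ⁅G₂ x, G₁ z⁆)

/-- For skew-adjoint F-linear operators `H₁, H₂` and 1-forms `ξ, η, ζ` with gradients
satisfying `H₁(*ξ) = H₂(*η)` and `H₁(*η) = H₂(*ζ)`, for all `X, Y`:
`2(dξ(H₁X, H₁Y) − dη(H₁X, H₂Y) − dη(H₂X, H₁Y) + dζ(H₂X, H₂Y))
  = [H₁,H₁](*ξ, X, Y) − 2[H₁,H₂](*η, X, Y) + [H₂,H₂](*ζ, X, Y)`. -/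
theorem schouten_bracket_identity
    {F : Type*} [CommRing F] [Algebra ℝ F]
    {X : Type*} [LieRing X] [LieAlgebra ℝ X] [Module F X] [IsScalarTower ℝ F X]
    -- the action of X on F by ℝ-derivations
    (act : X →ₗ[ℝ] F →ₗ[ℝ] F)
    (hact_deriv : ∀ (x : X) (Φ Ψ : F), act x (Φ * Ψ) = act x Φ * Ψ + Φ * act x Ψ)
    (hact_Fsmul : ∀ (Φ : F) (x : X) (Ψ : F), act (Φ • x) Ψ = Φ * act x Ψ)
    (hact_lie : ∀ (x y : X) (Φ : F), act ⁅x, y⁆ Φ = act x (act y Φ) - act y (act x Φ))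
    (hbracket_smul : ∀ (x y : X) (Φ : F), ⁅x, Φ • y⁆ = act x Φ • y + Φ • ⁅x, y⁆)
    -- the symmetric F-bilinear form
    (P : X → X → F)
    (hP_symm : ∀ x y : X, P x y = P y x)
    (hP_add : ∀ x y z : X, P (x + y) z = P x z + P y z)
    (hP_smul : ∀ (Φ : F) (x y : X), P (Φ • x) y = Φ * P x y)
    -- the skew-adjoint F-linear operators H₁, H₂
    (H₁ H₂ : X →ₗ[F] X)
    (hH₁_skew : ∀ x y : X, P (H₁ x) y = - P x (H₁ y))
    (hH₂_skew : ∀ x y : X, P (H₂ x) y = - P x (H₂ y))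
    -- the 1-forms ξ, η, ζ and their gradients
    (ξ η ζ : X →ₗ[F] F) (gξ gη gζ : X)
    (hgξ : ∀ y : X, P gξ y = ξ y)
    (hgη : ∀ y : X, P gη y = η y)
    (hgζ : ∀ y : X, P gζ y = ζ y)
    (hcompat₁ : H₁ gξ = H₂ gη) (hcompat₂ : H₁ gη = H₂ gζ)
    -- the exterior derivative of a 1-form
    (dOne : (X →ₗ[F] F) → X → X → F)
    (hdOne : ∀ (ω : X →ₗ[F] F) (x y : X),
      dOne ω x y = act x (ω y) - act y (ω x) - ω ⁅x, y⁆) :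
    ∀ x y : X,
      2 * (dOne ξ (H₁ x) (H₁ y) - dOne η (H₁ x) (H₂ y)
            - dOne η (H₂ x) (H₁ y) + dOne ζ (H₂ x) (H₂ y))
        = dualSchouten (fun v Φ => act v Φ) P H₁ H₁ gξ x y
          - 2 * dualSchouten (fun v Φ => act v Φ) P H₁ H₂ gη x y
          + dualSchouten (fun v Φ => act v Φ) P H₂ H₂ gζ x y := by
  intro x y
  have hPneg : ∀ u v : X, P u (-v) = - P u v := by
    intro u v
    rw [hP_symm, ← neg_one_smul F v, hP_smul, hP_symm]; ring
  have r1 : ∀ u v : X, P u (H₁ v) = - P (H₁ u) v := fun u v => by rw [hH₁_skew]; ring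
  have r2 : ∀ u v : X, P u (H₂ v) = - P (H₂ u) v := fun u v => by rw [hH₂_skew]; ring
  have ha : ∀ (u a b : X), P u ⁅a,b⁆ = - P u ⁅b,a⁆ := fun u a b => by
    rw [← lie_skew, hPneg]
  simp only [dualSchouten, hdOne, ← hgξ, ← hgη, ← hgζ, hcompat₁, hcompat₂]
  have e1 : P gξ (H₁ y) = P (H₁ y) gξ := hP_symm _ _
  have e2 : P gξ (H₁ x) = -P (H₂ gη) x := by rw [r1, hcompat₁]
  have e3 : P gξ ⁅H₁ x, H₁ y⁆ = -P gξ ⁅H₁ y, H₁ x⁆ := ha _ _ _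
  have e4 : P gη (H₂ y) = P (H₂ y) gη := hP_symm _ _
  have e5 : P gη (H₁ x) = -P (H₂ gζ) x := by rw [r1, hcompat₂]
  have e6 : P gη ⁅H₁ x, H₂ y⁆ = -P gη ⁅H₂ y, H₁ x⁆ := ha _ _ _
  have e7 : P gη (H₁ y) = P (H₁ y) gη := hP_symm _ _
  have e8 : P gη (H₂ x) = -P (H₂ gη) x := r2 _ _
  have e9 : P gη ⁅H₂ x, H₁ y⁆ = -P gη ⁅H₁ y, H₂ x⁆ := ha _ _ _
  have e10 : P gζ (H₂ y) = P (H₂ y) gζ := hP_symm _ _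
  have e11 : P gζ (H₂ x) = -P (H₂ gζ) x := r2 _ _
  have e12 : P gζ ⁅H₂ x, H₂ y⁆ = -P gζ ⁅H₂ y, H₂ x⁆ := ha _ _ _
  simp only [e1, e2, e3, e4, e5, e6, e7, e8, e9, e10, e11, e12, map_neg]
  ring
end

section
/- In any ∂^ℤ-algebra A, for every f ∈ F := ∫(A), every g ∈ A and every m ∈ ℤ: ∂^m(fg) = f(∂^m g) and ∫(fg) = f(∫g). -/
/-!
Every `f = h - ∂⁰ h` is killed by all `∂ᵐ`, since `∂ᵐ ∂⁰ = ∂ᵐ`. Hence the Leibniz rule makes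
multiplication by `f` commute with `∂¹`, and rule (iii) makes it commute with `∂⁻¹`. As
`m ↦ ∂ᵐ` is multiplicative from `ℤ`, which is generated by `±1`, multiplication by `f` commutes
with every `∂ᵐ`; the case `m = 0` gives the statement about `∫ = id - ∂⁰`.
-/

theorem commute_of_commute_one_of_commute_neg_one {M : Type*} [Monoid M] {D : ℤ → M}
    (hD : ∀ m n, D (m + n) = D m * D n) {T : M}
    (h_one : Commute (D 1) T) (h_neg_one : Commute (D (-1)) T) (m : ℤ) : Commute (D m) T := by
  induction m using Int.induction_on with
  | zero => simpa [← hD] using h_neg_one.mul_left h_one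
  | succ n ih => rw [hD]; exact ih.mul_left h_one
  | pred n ih => rw [sub_eq_add_neg, hD]; exact ih.mul_left h_neg_one

section DZ

variable {A : Type*} [CommRing A] [Algebra ℝ A] {D : ℤ → A →ₗ[ℝ] A}

theorem apply_sub_apply_zero_eq_zero (hD_comp : ∀ (m n : ℤ) (f : A), D m (D n f) = D (m + n) f)
    (m : ℤ) (h : A) : D m (h - D 0 h) = 0 := by
  rw [map_sub, hD_comp, add_zero, sub_self]

theorem commute_mulLeft_of_forall_apply_eq_zero
    (hD_comp : ∀ (m n : ℤ) (f : A), D m (D n f) = D (m + n) f)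
    (hD_leibniz : ∀ f g : A, D 1 (f * g) = D 1 f * g + f * D 1 g)
    (hD_parts : ∀ f g : A, D (-1) ((f - D 0 f) * g) = (f - D 0 f) * D (-1) g)
    {f : A} (hf : ∀ m, D m f = 0) (m : ℤ) :
    Commute (D m) (LinearMap.mulLeft ℝ f) := by
  have hD_add : ∀ m n, D (m + n) = D m * D n := fun m n =>
    LinearMap.ext fun x => (hD_comp m n x).symm
  refine commute_of_commute_one_of_commute_neg_one hD_add ?_ ?_ m
  · refine LinearMap.ext fun x => ?_
    simp [Module.End.mul_apply, hD_leibniz, hf]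
  · refine LinearMap.ext fun x => ?_
    simpa [Module.End.mul_apply, hf] using hD_parts f x

end DZ

/-- In any ∂^ℤ-algebra `A`, for every `f ∈ F := ∫(A)`, every `g ∈ A` and every `m ∈ ℤ`:
`∂^m (f * g) = f * ∂^m g` and `∫(f * g) = f * ∫ g`.  Here `∫ f := f - ∂⁰ f`. -/
theorem dZ_algebra_F_linear
    {A : Type*} [CommRing A] [Algebra ℝ A]
    (D : ℤ → A →ₗ[ℝ] A)
    (hD_comp : ∀ (m n : ℤ) (f : A), D m (D n f) = D (m + n) f)
    (hD_leibniz : ∀ f g : A, D 1 (f * g) = D 1 f * g + f * D 1 g)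
    (hD_parts : ∀ f g : A, D (-1) ((f - D 0 f) * g) = (f - D 0 f) * D (-1) g)
    (F : Set A) (hF : F = Set.range (fun f : A => f - D 0 f)) :
    ∀ f ∈ F, ∀ (g : A) (m : ℤ),
      D m (f * g) = f * D m g
      ∧ (f * g - D 0 (f * g)) = f * (g - D 0 g) := by
  rintro _ hf g m
  obtain ⟨h, rfl⟩ := hF ▸ hf
  have hcomm := commute_mulLeft_of_forall_apply_eq_zero hD_comp hD_leibniz hD_parts
    (apply_sub_apply_zero_eq_zero hD_comp · h)
  have hmul : ∀ m, D m ((h - D 0 h) * g) = (h - D 0 h) * D m g := fun m =>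
    LinearMap.congr_fun (hcomm m) g
  exact ⟨hmul m, by rw [hmul 0, mul_sub]⟩
end

section
/- In any ∂^ℤ-algebra A, the integration-by-parts formulas hold: ∫((∂^1 f)g + f(∂^1 g)) = 0 and ∫((∂^{-1} f)g + f(∂^{-1} g)) = 0 for all f, g ∈ A. -/
/-- Integration-by-parts in any ∂^ℤ-algebra:
`∫((∂¹ f) g + f (∂¹ g)) = 0` and `∫((∂⁻¹ f) g + f (∂⁻¹ g)) = 0`.
Here `∫ f := f - ∂⁰ f`. -/
theorem dZ_algebra_integration_by_parts
    {A : Type*} [CommRing A] [Algebra ℝ A]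
    (D : ℤ → A →ₗ[ℝ] A)
    (hD_comp : ∀ (m n : ℤ) (f : A), D m (D n f) = D (m + n) f)
    (hD_leibniz : ∀ f g : A, D 1 (f * g) = D 1 f * g + f * D 1 g)
    (hD_parts : ∀ f g : A, D (-1) ((f - D 0 f) * g) = (f - D 0 f) * D (-1) g) :
    ∀ f g : A,
      ((D 1 f * g + f * D 1 g) - D 0 (D 1 f * g + f * D 1 g) = 0)
      ∧ ((D (-1) f * g + f * D (-1) g) - D 0 (D (-1) f * g + f * D (-1) g) = 0) := by
  have hfix : ∀ (m : ℤ) (h : A), D 0 (D m h) = D m h := by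
    intro m h
    rw [hD_comp, zero_add]
  intro f g
  constructor
  · rw [← hD_leibniz, hfix, sub_self]
  · have key : D (-1) f * g + f * D (-1) g
        = D (-1) ((f - D 0 f) * g) + D (-1) ((g - D 0 g) * f)
          + D 1 (D (-1) f * D (-1) g) := by
      rw [hD_parts, hD_parts, hD_leibniz, hD_comp 1 (-1) f, hD_comp 1 (-1) g]
      norm_num
      ring
    rw [key, map_add, map_add, hfix, hfix, hfix, sub_self]
end

section
/- In any ∂^ℤ-algebra A, the subset I := {f ∈ A : ∫(fg) = 0 for all g ∈ A} is an ideal of the ∂^ℤ-algebra A: it is an ℝ-subspace, a ring ideal of A (fh ∈ I for f ∈ I, h ∈ A), and ∂^m(I) ⊆ I for every m ∈ ℤ. -/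
/-! Only closure under `∂^m` needs an argument, and by axiom (i) it reduces to `m = 1` and
`m = -1`. The key fact is that `∫` kills every `∂^m`-image, since `∂⁰∂^m = ∂^m`; with Leibniz this
gives integration by parts without boundary term, `∫(u ∂¹h) = -∫(∂¹u h)`, which settles `m = 1`.
For `m = -1` split `g = ∂¹∂⁻¹g + ∫g`: the `∫g` part vanishes because `∂⁻¹f · ∫g = ∂⁻¹(∫g · f)` by
axiom (iii), and integrating the other part by parts leaves `-∫(∂⁰f · ∂⁻¹g)`, where `∂⁰f = f`
for `f ∈ I` (take `g = 1`). -/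

namespace DZAlgebra

variable {R A : Type*} [CommSemiring R] [CommRing A] [Algebra R A]

def integral (D : ℤ → A →ₗ[R] A) : A →ₗ[R] A := LinearMap.id - D 0

theorem integral_apply (D : ℤ → A →ₗ[R] A) (f : A) : integral D f = f - D 0 f := rfl

variable {D : ℤ → A →ₗ[R] A}

theorem integral_D (hcomp : ∀ m n f, D m (D n f) = D (m + n) f) (m : ℤ) (f : A) :
    integral D (D m f) = 0 := by
  rw [integral_apply, hcomp, zero_add, sub_self]

theorem integral_mul_D_one (hcomp : ∀ m n f, D m (D n f) = D (m + n) f)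
    (hleib : ∀ f g, D 1 (f * g) = D 1 f * g + f * D 1 g) (u h : A) :
    integral D (u * D 1 h) = -integral D (D 1 u * h) := by
  rw [eq_neg_iff_add_eq_zero, ← map_add, add_comm, ← hleib, integral_D hcomp]

theorem integral_D_neg_one_mul_integral (hcomp : ∀ m n f, D m (D n f) = D (m + n) f)
    (hparts : ∀ f g, D (-1) ((f - D 0 f) * g) = (f - D 0 f) * D (-1) g) (f g : A) :
    integral D (D (-1) f * integral D g) = 0 := by
  rw [mul_comm, integral_apply D g, ← hparts, integral_D hcomp]

variable (D) in
def traceNullIdeal : Ideal A where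
  carrier := {f | ∀ g, integral D (f * g) = 0}
  zero_mem' g := by rw [zero_mul, map_zero]
  add_mem' hf hg g := by rw [add_mul, map_add, hf g, hg g, add_zero]
  smul_mem' c f hf g := by rw [smul_eq_mul, mul_comm c, mul_assoc, hf]

theorem D_zero_eq_of_mem_traceNullIdeal {f : A} (hf : f ∈ traceNullIdeal D) : D 0 f = f := by
  rw [eq_comm, ← sub_eq_zero, ← integral_apply, ← mul_one f]
  exact hf 1

theorem D_one_mem_traceNullIdeal (hcomp : ∀ m n f, D m (D n f) = D (m + n) f)
    (hleib : ∀ f g, D 1 (f * g) = D 1 f * g + f * D 1 g) {f : A}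
    (hf : f ∈ traceNullIdeal D) : D 1 f ∈ traceNullIdeal D := fun g => by
  rw [← neg_eq_zero, ← integral_mul_D_one hcomp hleib, hf]

theorem D_neg_one_mem_traceNullIdeal (hcomp : ∀ m n f, D m (D n f) = D (m + n) f)
    (hleib : ∀ f g, D 1 (f * g) = D 1 f * g + f * D 1 g)
    (hparts : ∀ f g, D (-1) ((f - D 0 f) * g) = (f - D 0 f) * D (-1) g) {f : A}
    (hf : f ∈ traceNullIdeal D) : D (-1) f ∈ traceNullIdeal D := fun g => by
  have hsplit : g = D 1 (D (-1) g) + integral D g := by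
    rw [hcomp, integral_apply, add_neg_cancel, add_sub_cancel]
  have hfactor : D 1 (D (-1) f) = f := by
    rw [hcomp]; exact D_zero_eq_of_mem_traceNullIdeal hf
  rw [hsplit, mul_add, map_add, integral_D_neg_one_mul_integral hcomp hparts,
    integral_mul_D_one hcomp hleib, hfactor, hf, neg_zero, add_zero]

theorem D_mem_traceNullIdeal (hcomp : ∀ m n f, D m (D n f) = D (m + n) f)
    (hleib : ∀ f g, D 1 (f * g) = D 1 f * g + f * D 1 g)
    (hparts : ∀ f g, D (-1) ((f - D 0 f) * g) = (f - D 0 f) * D (-1) g) (m : ℤ) {f : A}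
    (hf : f ∈ traceNullIdeal D) : D m f ∈ traceNullIdeal D := by
  induction m using Int.induction_on with
  | zero => rwa [D_zero_eq_of_mem_traceNullIdeal hf]
  | succ k ih =>
    rw [add_comm, ← hcomp]
    exact D_one_mem_traceNullIdeal hcomp hleib ih
  | pred k ih =>
    rw [sub_eq_neg_add, ← hcomp]
    exact D_neg_one_mem_traceNullIdeal hcomp hleib hparts ih

end DZAlgebra

open DZAlgebra in
/-- In any ∂^ℤ-algebra `A`, the set `I := {f | ∫(f g) = 0 for all g}` is an ideal of the
∂^ℤ-algebra `A`: an ℝ-subspace, a ring ideal, closed under every `∂^m`.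
Here `∫ f := f - ∂⁰ f`. -/
theorem dZ_algebra_trace_null_ideal
    {A : Type*} [CommRing A] [Algebra ℝ A]
    (D : ℤ → A →ₗ[ℝ] A)
    (hD_comp : ∀ (m n : ℤ) (f : A), D m (D n f) = D (m + n) f)
    (hD_leibniz : ∀ f g : A, D 1 (f * g) = D 1 f * g + f * D 1 g)
    (hD_parts : ∀ f g : A, D (-1) ((f - D 0 f) * g) = (f - D 0 f) * D (-1) g)
    (I : Set A) (hI : I = {f : A | ∀ g : A, f * g - D 0 (f * g) = 0}) :
    (∀ f ∈ I, ∀ g ∈ I, f + g ∈ I)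
    ∧ (∀ (r : ℝ), ∀ f ∈ I, r • f ∈ I)
    ∧ (∀ f ∈ I, ∀ h : A, f * h ∈ I)
    ∧ (∀ (m : ℤ), ∀ f ∈ I, D m f ∈ I) := by
  obtain rfl : I = traceNullIdeal D := hI
  exact ⟨fun _ hf _ hg => add_mem hf hg,
    fun r _ hf => Submodule.smul_of_tower_mem _ r hf,
    fun _ hf h => Ideal.mul_mem_right h _ hf,
    fun m _ hf => D_mem_traceNullIdeal hD_comp hD_leibniz hD_parts m hf⟩
end
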